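/- The reflection equation of Proposition 4.9 (higher-spin version): for every K ∈ ℤ_{≥0}, j ∈ {0,1}, and ℓ ∈ {0,1}, ∑_{I=0}^∞ (∏_{k=1}^{I} (1-q^{2k-1})/(1-s² q^{2k-1})) · L_{x,s}(2I, 1-j; K, ℓ) = ∑_{I=0}^∞ (∏_{k=1}^{I} (1-q^{2k-1})/(1-s² q^{2k-1})) · M_{x,s}(2I, j; K, 1-ℓ), where only finitely many terms of each sum are nonzero (those with 2I + input arrow count = K + output arrow count). -/

import Mathlib

/-!
Both weights vanish unless arrows are conserved (`I + j = K + ℓ`), so each side has at most one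
nonzero term. For `j ≠ ℓ` the two sides agree term by term, because
`L(I,1;I,1) = M(I,0;I,0)` and `L(I,0;I,0) = M(I,1;I,1)`. For `j = ℓ` the case `j = ℓ = 1` is `x`
times the case `j = ℓ = 0`, and in the latter `K = 2m + 1` must be odd, the left side is the term
`I = m`, the right side the term `I = m + 1`, and they agree because consecutive coefficients have
ratio `reflectionCoeff (m+1) / reflectionCoeff m = (1 - q^(2m+1)) / (1 - s² q^(2m+1))`.
-/

variable {F : Type*} [Field F]

/-- The higher-spin six-vertex `L`-weight `L_{x,s}(I, j; K, ℓ)`. -/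
noncomputable def Lw (q s x : F) (I j K l : ℕ) : F :=
  if j = 0 ∧ l = 0 ∧ K = I then (1 - s*x*q^I) / (1 - s*x)
  else if j = 1 ∧ l = 1 ∧ K = I then (x - s*q^I) / (1 - s*x)
  else if j = 1 ∧ l = 0 ∧ K = I + 1 then (1 - q^(I+1)) / (1 - s*x)
  else if j = 0 ∧ l = 1 ∧ I = K + 1 then x * (1 - s^2*q^K) / (1 - s*x)
  else 0

/-- The higher-spin six-vertex `M`-weight `M_{x,s}(I, j; K, ℓ)`. -/
noncomputable def Mw (q s x : F) (I j K l : ℕ) : F :=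
  if j = 0 ∧ l = 0 ∧ K = I then (x - s*q^I) / (1 - s*x)
  else if j = 1 ∧ l = 1 ∧ K = I then (1 - s*x*q^I) / (1 - s*x)
  else if j = 1 ∧ l = 0 ∧ K = I + 1 then x * (1 - q^(I+1)) / (1 - s*x)
  else if j = 0 ∧ l = 1 ∧ I = K + 1 then (1 - s^2*q^K) / (1 - s*x)
  else 0

section Weights

variable (q s x : F) (I K : ℕ)

theorem Lw_one_one_eq_Mw_zero_zero : Lw q s x I 1 K 1 = Mw q s x I 0 K 0 := by
  simp [Lw, Mw]

theorem Lw_zero_zero_eq_Mw_one_one : Lw q s x I 0 K 0 = Mw q s x I 1 K 1 := by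
  simp [Lw, Mw]

theorem Lw_zero_one_eq_mul_Mw : Lw q s x I 0 K 1 = x * Mw q s x I 0 K 1 := by
  simp [Lw, Mw, mul_div_assoc]

theorem Mw_one_zero_eq_mul_Lw : Mw q s x I 1 K 0 = x * Lw q s x I 1 K 0 := by
  simp [Lw, Mw, mul_div_assoc]

theorem Lw_one_zero_of_ne (h : K ≠ I + 1) : Lw q s x I 1 K 0 = 0 := by
  simp [Lw, h]

theorem Lw_one_zero_succ : Lw q s x I 1 (I + 1) 0 = (1 - q^(I+1)) / (1 - s*x) := by
  simp [Lw]

theorem Mw_zero_one_of_ne (h : I ≠ K + 1) : Mw q s x I 0 K 1 = 0 := by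
  simp [Mw, h]

theorem Mw_zero_one_succ : Mw q s x (K + 1) 0 K 1 = (1 - s^2*q^K) / (1 - s*x) := by
  simp [Mw]

end Weights

noncomputable def reflectionCoeff (q s : F) (I : ℕ) : F :=
  ∏ k ∈ Finset.Icc 1 I, (1 - q^(2*k-1)) / (1 - s^2 * q^(2*k-1))

theorem reflectionCoeff_succ_mul {q s : F} {m : ℕ} (hm : 1 - s^2 * q^(2*m+1) ≠ 0) :
    reflectionCoeff q s (m + 1) * (1 - s^2 * q^(2*m+1))
      = reflectionCoeff q s m * (1 - q^(2*m+1)) := by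
  rw [reflectionCoeff, Finset.prod_Icc_succ_top (Nat.le_add_left 1 m),
    show 2 * (m + 1) - 1 = 2 * m + 1 by omega, mul_assoc, div_mul_cancel₀ _ hm]
  rfl

theorem finsum_reflectionCoeff_mul_Lw_one_zero {q s : F} (x : F)
    (hs : ∀ m : ℕ, 1 - s^2 * q^(2*m+1) ≠ 0) (K : ℕ) :
    ∑ᶠ I : ℕ, reflectionCoeff q s I * Lw q s x (2*I) 1 K 0
      = ∑ᶠ I : ℕ, reflectionCoeff q s I * Mw q s x (2*I) 0 K 1 := by
  rcases Nat.even_or_odd' K with ⟨m, rfl | rfl⟩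
  · have hL (I : ℕ) : Lw q s x (2*I) 1 (2*m) 0 = 0 := Lw_one_zero_of_ne _ _ _ _ _ (by omega)
    have hM (I : ℕ) : Mw q s x (2*I) 0 (2*m) 1 = 0 := Mw_zero_one_of_ne _ _ _ _ _ (by omega)
    simp only [hL, hM, mul_zero]
  · rw [finsum_eq_single _ m fun I hI => by rw [Lw_one_zero_of_ne _ _ _ _ _ (by omega), mul_zero],
      finsum_eq_single _ (m + 1) fun I hI => by rw [Mw_zero_one_of_ne _ _ _ _ _ (by omega), mul_zero],
      Lw_one_zero_succ, show 2 * (m + 1) = 2 * m + 1 + 1 by ring, Mw_zero_one_succ,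
      ← mul_div_assoc, ← mul_div_assoc, reflectionCoeff_succ_mul (hs m)]

theorem reflection_equation_general (q s x : F)
    (hs : ∀ k : ℕ, 1 ≤ k → 1 - s^2 * q^(2*k-1) ≠ 0)
    (K : ℕ) (j l : ℕ) (hj : j ≤ 1) (hl : l ≤ 1) :
    (∑ᶠ I : ℕ, (∏ k ∈ Finset.Icc 1 I, (1 - q^(2*k-1)) / (1 - s^2 * q^(2*k-1)))
        * Lw q s x (2*I) (1-j) K l)
    = ∑ᶠ I : ℕ, (∏ k ∈ Finset.Icc 1 I, (1 - q^(2*k-1)) / (1 - s^2 * q^(2*k-1)))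
        * Mw q s x (2*I) j K (1-l) := by
  have hs' : ∀ m : ℕ, 1 - s^2 * q^(2*m+1) ≠ 0 := fun m => by
    simpa [Nat.mul_succ] using hs (m + 1) (Nat.le_add_left 1 m)
  change ∑ᶠ I, reflectionCoeff q s I * _ = ∑ᶠ I, reflectionCoeff q s I * _
  interval_cases j <;> interval_cases l
  · exact finsum_reflectionCoeff_mul_Lw_one_zero x hs' K
  · simp only [Nat.sub_zero, Nat.sub_self, Lw_one_one_eq_Mw_zero_zero]
  · simp only [Nat.sub_zero, Nat.sub_self, Lw_zero_zero_eq_Mw_one_one]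
  · simp only [Nat.sub_self, Lw_zero_one_eq_mul_Mw, Mw_one_zero_eq_mul_Lw, mul_left_comm _ x,
      ← mul_finsum, finsum_reflectionCoeff_mul_Lw_one_zero x hs' K]

/-- The reflection equation (higher-spin version of Proposition 4.9 of
Barraquand–Borodin–Corwin–Wheeler): the dot flips the boundary state `i` to `1 - i`. -/
theorem reflection_equation (q s x : F) (hx : 1 - s*x ≠ 0)
    (hs : ∀ k : ℕ, 1 ≤ k → 1 - s^2 * q^(2*k-1) ≠ 0)
    (K : ℕ) (j l : ℕ) (hj : j ≤ 1) (hl : l ≤ 1) :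
    (∑ᶠ I : ℕ, (∏ k ∈ Finset.Icc 1 I, (1 - q^(2*k-1)) / (1 - s^2 * q^(2*k-1)))
        * Lw q s x (2*I) (1-j) K l)
    = ∑ᶠ I : ℕ, (∏ k ∈ Finset.Icc 1 I, (1 - q^(2*k-1)) / (1 - s^2 * q^(2*k-1)))
        * Mw q s x (2*I) j K (1-l) :=
  reflection_equation_general q s x hs K j l hj hl
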